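/- arXiv:1603.04660 — 6 statements merged into one kernel-verified Lean document; each statement's English description precedes it below -/
import Mathlib

section
/- If (N_f)^{N_f}/N_f! < e^{λπr_c²/β}, then the vector p*_c(i) = (β/(λπr_c² N_f))·Σ_{j=1}^{N_f} ln(j/i) + 1/N_f, for i = 1,…,N_f, has all entries positive and sums to 1; i.e., it is a valid probability distribution on {1,…,N_f}. -/
/-! Since `∑ j, log (j / i) = log (N! / i ^ N)` decreases in `i`, the smallest entry is the one
at `i = N`, and its positivity is exactly the hypothesis `log (N ^ N / N!) < λπr_c² / β`. The
entries sum to `N · (1 / N) = 1` because `∑ i, ∑ j, (log j - log i)` vanishes by antisymmetry. -/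

open Real Finset

open scoped Nat

theorem Finset.sum_sum_sub_eq_zero {ι M : Type*} [AddCommGroup M] (s : Finset ι) (f : ι → M) :
    ∑ i ∈ s, ∑ j ∈ s, (f j - f i) = 0 := by
  simp only [sum_sub_distrib]
  exact sub_eq_zero.2 sum_comm

lemma sum_sum_log_div_eq_zero {s : Finset ℕ} (hs : 0 ∉ s) :
    ∑ i ∈ s, ∑ j ∈ s, log ((j : ℝ) / i) = 0 := by
  rw [← sum_sum_sub_eq_zero s (fun k : ℕ => log (k : ℝ))]
  refine sum_congr rfl fun i hi => sum_congr rfl fun j hj => ?_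
  have hi0 : (i : ℝ) ≠ 0 := Nat.cast_ne_zero.2 (ne_of_mem_of_not_mem hi hs)
  have hj0 : (j : ℝ) ≠ 0 := Nat.cast_ne_zero.2 (ne_of_mem_of_not_mem hj hs)
  exact log_div hj0 hi0

lemma prod_Icc_natCast_eq_factorial (N : ℕ) : ∏ j ∈ Icc 1 N, (j : ℝ) = N ! := by
  rw [← Ico_add_one_right_eq_Icc, ← Nat.cast_prod, prod_Ico_id_eq_factorial]

lemma sum_Icc_log_div_eq_log_factorial_div (N : ℕ) {i : ℕ} (hi : i ≠ 0) :
    ∑ j ∈ Icc 1 N, log ((j : ℝ) / i) = log (N ! / (i : ℝ) ^ N) := by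
  rw [← log_prod fun j hj => div_ne_zero (Nat.cast_ne_zero.2 (by grind))
    (Nat.cast_ne_zero.2 hi), prod_div_distrib, prod_const, Nat.card_Icc, Nat.add_sub_cancel,
    prod_Icc_natCast_eq_factorial]

lemma div_mul_add_one_div_pos {A β x N : ℝ} (hA : 0 < A) (hN : 0 < N) (h : 0 < β * x + A) :
    0 < β / (A * N) * x + 1 / N := by
  have : β / (A * N) * x + 1 / N = (β * x + A) / (A * N) := by field_simp
  rw [this]
  exact div_pos h (mul_pos hA hN)

theorem optimal_caching_valid_distribution (N : ℕ) (hN : 0 < N)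
    (β lam rc : ℝ) (hβ : 0 < β) (hlam : 0 < lam) (hrc : 0 < rc)
    (hcond : (N : ℝ) ^ N / (Nat.factorial N) < Real.exp (lam * π * rc ^ 2 / β)) :
    (∀ i ∈ Finset.Icc 1 N,
      0 < β / (lam * π * rc ^ 2 * N) * (∑ j ∈ Finset.Icc 1 N, Real.log ((j : ℝ) / i)) + 1 / N) ∧
    ∑ i ∈ Finset.Icc 1 N,
      (β / (lam * π * rc ^ 2 * N) * (∑ j ∈ Finset.Icc 1 N, Real.log ((j : ℝ) / i)) + 1 / N) = 1 := by
  set A := lam * π * rc ^ 2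
  have hA : 0 < A := by positivity
  have hNR : (0 : ℝ) < N := by exact_mod_cast hN
  refine ⟨fun i hi => ?_, ?_⟩
  · obtain ⟨hi1, hiN⟩ := mem_Icc.1 hi
    have hlog : log ((N : ℝ) ^ N / N !) < A / β := (log_lt_iff_lt_exp (by positivity)).2 hcond
    have hmin : -log ((N : ℝ) ^ N / N !) ≤ log (N ! / (i : ℝ) ^ N) := by
      rw [← log_inv, inv_div]
      gcongr
    have hnum : 0 < β * log (N ! / (i : ℝ) ^ N) + A := by
      have := mul_le_mul_of_nonneg_left hmin hβ.le
      rw [lt_div_iff₀ hβ] at hlog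
      linarith
    rw [sum_Icc_log_div_eq_log_factorial_div N (by omega)]
    exact div_mul_add_one_div_pos hA hNR hnum
  · rw [sum_add_distrib, ← mul_sum, sum_sum_log_div_eq_zero (by simp), mul_zero, zero_add,
      sum_const, Nat.card_Icc, Nat.add_sub_cancel, nsmul_eq_mul, mul_one_div_cancel hNR.ne']
end

section
/- Let c = λπr_c² > 0 and x_i = ln(p_r(i))/c where p_r is the Zipf distribution with parameter β > 0 on {1,…,N_f}. If (N_f)^{N_f}/N_f! < e^{c/β}, then the distribution p*_c(i) = (β/(c·N_f))·Σ_{j=1}^{N_f} ln(j/i) + 1/N_f is the unique maximizer of Σ_i p_r(i)(1 − e^{−c·p_i}) over the probability simplex. -/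
open Real Finset
open scoped Nat

/-!
The optimum equalises marginal utilities: with `Z = ∑ k ^ (-β)`, every term
`p_r(i) e^{-c p*(i)}` equals the same constant `K = e^{-(β log N! + c)/N} / Z`. Writing
`p_r(i) e^{-c q_i} = K e^{-c (q_i - p*(i))}` and using `e^x ≥ 1 + x`, the sum
`∑ p_r(i) e^{-c q_i}` is at least its value at `p*` on the whole hyperplane `∑ q_i = 1`, strictly
unless `q = p*`. The hypothesis `N^N / N! < e^{c/β}` says exactly that `p*(N) > 0`, hence
`p* ≥ 0`; since `N! ≤ N^N` it also forces `c > 0`.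
-/

section EqualMarginals

variable {ι : Type*} {w p q : ι → ℝ} {c K : ℝ}

theorem mul_exp_neg_mul_eq_mul_exp_sub {i : ι} (hp : w i * exp (-c * p i) = K) :
    w i * exp (-c * q i) = K * exp (-c * (q i - p i)) := by
  rw [← hp, mul_assoc, ← exp_add]
  ring_nf

variable [Fintype ι]

theorem sum_mul_tangent_eq (hp : ∀ i, w i * exp (-c * p i) = K) (hq : ∑ i, q i = ∑ i, p i) :
    ∑ i, K * (-c * (q i - p i) + 1) = ∑ i, w i * exp (-c * p i) := by
  simp only [hp, mul_add, mul_one, sum_add_distrib, ← mul_sum, sum_sub_distrib, hq, sub_self,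
    mul_zero, zero_add]

theorem sum_mul_one_sub_exp_neg_mul_le (hK : 0 ≤ K) (hp : ∀ i, w i * exp (-c * p i) = K)
    (hq : ∑ i, q i = ∑ i, p i) :
    ∑ i, w i * (1 - exp (-c * q i)) ≤ ∑ i, w i * (1 - exp (-c * p i)) := by
  have : ∑ i, w i * exp (-c * p i) ≤ ∑ i, w i * exp (-c * q i) := by
    rw [← sum_mul_tangent_eq hp hq]
    refine sum_le_sum fun i _ => ?_
    rw [mul_exp_neg_mul_eq_mul_exp_sub (hp i)]
    exact mul_le_mul_of_nonneg_left (add_one_le_exp _) hK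
  simp only [mul_one_sub, sum_sub_distrib]
  linarith

theorem eq_of_sum_mul_one_sub_exp_neg_mul_eq (hK : 0 < K) (hc : c ≠ 0)
    (hp : ∀ i, w i * exp (-c * p i) = K) (hq : ∑ i, q i = ∑ i, p i)
    (heq : ∑ i, w i * (1 - exp (-c * q i)) = ∑ i, w i * (1 - exp (-c * p i))) : q = p := by
  by_contra hqp
  obtain ⟨j, hj⟩ := Function.ne_iff.mp hqp
  have : ∑ i, w i * exp (-c * p i) < ∑ i, w i * exp (-c * q i) := by
    rw [← sum_mul_tangent_eq hp hq]
    refine sum_lt_sum (fun i _ => ?_) ⟨j, mem_univ j, ?_⟩ <;>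
      rw [mul_exp_neg_mul_eq_mul_exp_sub (hp _)]
    · exact mul_le_mul_of_nonneg_left (add_one_le_exp _) hK.le
    · exact mul_lt_mul_of_pos_left
        (add_one_lt_exp (mul_ne_zero (neg_ne_zero.2 hc) (sub_ne_zero.2 hj))) hK
  simp only [mul_one_sub, sum_sub_distrib] at heq
  linarith

end EqualMarginals

theorem log_factorial_eq_sum_Icc_log (N : ℕ) : log (N ! : ℝ) = ∑ j ∈ Icc 1 N, log (j : ℝ) := by
  rw [← Ico_add_one_right_eq_Icc, ← prod_Ico_id_eq_factorial, Nat.cast_prod, log_prod]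
  intro j hj
  exact Nat.cast_ne_zero.2 (by grind)

theorem sum_Icc_log_div (N : ℕ) {x : ℝ} (hx : x ≠ 0) :
    ∑ j ∈ Icc 1 N, log ((j : ℝ) / x) = log (N ! : ℝ) - N * log x := by
  have hlog : ∀ j ∈ Icc 1 N, log ((j : ℝ) / x) = log j - log x := fun j hj =>
    log_div (Nat.cast_ne_zero.2 (by grind)) hx
  rw [sum_congr rfl hlog, sum_sub_distrib, sum_const, Nat.card_Icc, nsmul_eq_mul,
    log_factorial_eq_sum_Icc_log]
  simp

theorem sum_fin_log_succ (N : ℕ) : ∑ i : Fin N, log ((i : ℕ) + 1 : ℝ) = log (N ! : ℝ) := by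
  rw [← prod_range_add_one_eq_factorial, Nat.cast_prod, log_prod (fun i _ => by positivity),
    Fin.sum_univ_eq_sum_range (fun i => log ((i : ℝ) + 1))]
  push_cast
  rfl

theorem pos_of_pow_div_factorial_lt_exp {N : ℕ} {a : ℝ} (h : (N : ℝ) ^ N / N ! < exp a) :
    0 < a := by
  have : (1 : ℝ) ≤ (N : ℝ) ^ N / N ! := by
    rw [one_le_div (by positivity)]
    exact_mod_cast Nat.factorial_le_pow N
  exact one_lt_exp_iff.1 (this.trans_lt h)

/-- The paper's `p*_c(i)` for the file `i + 1`, after `∑_j log (j / i) = log N! - N log i`. -/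
noncomputable def zipfCacheOptimum (N : ℕ) (β c : ℝ) (i : Fin N) : ℝ :=
  β / (c * N) * (log (N ! : ℝ) - N * log ((i : ℕ) + 1 : ℝ)) + 1 / N

variable {N : ℕ} {β c : ℝ}

theorem sum_zipfCacheOptimum (hN : N ≠ 0) : ∑ i, zipfCacheOptimum N β c i = 1 := by
  simp only [zipfCacheOptimum, sum_add_distrib, ← mul_sum, sum_sub_distrib, sum_fin_log_succ,
    sum_const, card_univ, Fintype.card_fin, nsmul_eq_mul]
  field_simp
  ring

theorem zipfCacheOptimum_nonneg (hβ : 0 < β) (hc : 0 < c)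
    (hcond : (N : ℝ) ^ N / N ! < exp (c / β)) (i : Fin N) : 0 ≤ zipfCacheOptimum N β c i := by
  have hN : (0 : ℝ) < N := by have := i.pos; positivity
  have hlog : N * log N - log (N ! : ℝ) < c / β := by
    have := log_lt_log (by positivity) hcond
    rwa [log_exp, log_div (by positivity) (by positivity), log_pow] at this
  have hi : log ((i : ℕ) + 1 : ℝ) ≤ log N :=
    log_le_log (by positivity) (by exact_mod_cast i.isLt)
  have hpos : 0 < β * (log (N ! : ℝ) - N * log ((i : ℕ) + 1 : ℝ)) + c := by
    rw [lt_div_iff₀ hβ] at hlog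
    nlinarith [mul_le_mul_of_nonneg_left hi (mul_nonneg hβ.le hN.le)]
  have hform : zipfCacheOptimum N β c i =
      (β * (log (N ! : ℝ) - N * log ((i : ℕ) + 1 : ℝ)) + c) / (c * N) := by
    rw [zipfCacheOptimum]
    field_simp
  rw [hform]
  positivity

theorem rpow_neg_mul_exp_zipfCacheOptimum (hN : N ≠ 0) (hc : c ≠ 0) (Z : ℝ) (i : Fin N) :
    ((i : ℕ) + 1 : ℝ) ^ (-β) / Z * exp (-c * zipfCacheOptimum N β c i) =
      exp (-(β * log (N ! : ℝ) + c) / N) / Z := by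
  rw [rpow_def_of_pos (by positivity), div_mul_eq_mul_div, ← exp_add, zipfCacheOptimum]
  congr 2
  field_simp
  ring

theorem optimal_caching_unique_maximizer_general (N : ℕ) (hN : 0 < N)
    (β : ℝ) (hβ : 0 < β)
    (c : ℝ)
    (pr : Fin N → ℝ)
    (hpr : ∀ i : Fin N, pr i = ((i : ℕ) + 1 : ℝ) ^ (-β) / ∑ k ∈ Finset.Icc 1 N, (k : ℝ) ^ (-β))
    (hcond : (N : ℝ) ^ N / (Nat.factorial N) < Real.exp (c / β))
    (pstar : Fin N → ℝ)
    (hpstar : ∀ i : Fin N,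
      pstar i = β / (c * N) * (∑ j ∈ Finset.Icc 1 N, Real.log ((j : ℝ) / ((i : ℕ) + 1))) + 1 / N) :
    ((∀ i, 0 ≤ pstar i) ∧ ∑ i, pstar i = 1) ∧
    (∀ q : Fin N → ℝ, (∀ i, 0 ≤ q i) → ∑ i, q i = 1 →
      ∑ i, pr i * (1 - Real.exp (-c * q i)) ≤ ∑ i, pr i * (1 - Real.exp (-c * pstar i))) ∧
    (∀ q : Fin N → ℝ, (∀ i, 0 ≤ q i) → ∑ i, q i = 1 →
      ∑ i, pr i * (1 - Real.exp (-c * q i)) = ∑ i, pr i * (1 - Real.exp (-c * pstar i)) →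
      q = pstar) := by
  have hc : 0 < c := (div_pos_iff_of_pos_right hβ).1 (pos_of_pow_div_factorial_lt_exp hcond)
  have hpstar : pstar = zipfCacheOptimum N β c := funext fun i => by
    rw [hpstar, sum_Icc_log_div N (by positivity), zipfCacheOptimum]
  subst hpstar
  set Z := ∑ k ∈ Icc 1 N, (k : ℝ) ^ (-β)
  have hZ : 0 < Z := sum_pos (fun k hk => rpow_pos_of_pos (Nat.cast_pos.2 (mem_Icc.1 hk).1) _)
    ⟨1, mem_Icc.2 ⟨le_rfl, hN⟩⟩
  have hmarg : ∀ i, pr i * exp (-c * zipfCacheOptimum N β c i) =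
      exp (-(β * log (N ! : ℝ) + c) / N) / Z := fun i => by
    rw [hpr, rpow_neg_mul_exp_zipfCacheOptimum hN.ne' hc.ne']
  have hK : 0 < exp (-(β * log (N ! : ℝ) + c) / N) / Z := by positivity
  have hsum := sum_zipfCacheOptimum (β := β) (c := c) hN.ne'
  refine ⟨⟨zipfCacheOptimum_nonneg hβ hc hcond, hsum⟩, fun q _ hq => ?_, fun q _ hq heq => ?_⟩
  · exact sum_mul_one_sub_exp_neg_mul_le hK.le hmarg (hq.trans hsum.symm)
  · exact eq_of_sum_mul_one_sub_exp_neg_mul_eq hK hc.ne' hmarg (hq.trans hsum.symm) heq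

theorem optimal_caching_unique_maximizer (N : ℕ) (hN : 0 < N)
    (β lam rc : ℝ) (hβ : 0 < β) (hlam : 0 < lam) (hrc : 0 < rc)
    (c : ℝ) (hc : c = lam * π * rc ^ 2)
    (pr : Fin N → ℝ)
    (hpr : ∀ i : Fin N, pr i = ((i : ℕ) + 1 : ℝ) ^ (-β) / ∑ k ∈ Finset.Icc 1 N, (k : ℝ) ^ (-β))
    (hcond : (N : ℝ) ^ N / (Nat.factorial N) < Real.exp (c / β))
    (pstar : Fin N → ℝ)
    (hpstar : ∀ i : Fin N,
      pstar i = β / (c * N) * (∑ j ∈ Finset.Icc 1 N, Real.log ((j : ℝ) / ((i : ℕ) + 1))) + 1 / N) :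
    ((∀ i, 0 ≤ pstar i) ∧ ∑ i, pstar i = 1) ∧
    (∀ q : Fin N → ℝ, (∀ i, 0 ≤ q i) → ∑ i, q i = 1 →
      ∑ i, pr i * (1 - Real.exp (-c * q i)) ≤ ∑ i, pr i * (1 - Real.exp (-c * pstar i))) ∧
    (∀ q : Fin N → ℝ, (∀ i, 0 ≤ q i) → ∑ i, q i = 1 →
      ∑ i, pr i * (1 - Real.exp (-c * q i)) = ∑ i, pr i * (1 - Real.exp (-c * pstar i)) →
      q = pstar) :=
  optimal_caching_unique_maximizer_general N hN β hβ c pr hpr hcond pstar hpstar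
end

section
/- Fix c = λπr_c²/β > 0 and an integer N_f ≥ 2. If there exists an integer i* with 1 ≤ i* < N_f satisfying (i*+1)^{i*}/i*! ≥ e^c and (i*)^{i*}/i*! < e^c, then i* satisfies c − 1 ≤ i* ≤ c + ln(√(2π N_f)) + 1. -/
/-!
The lower bound is the Taylor estimate `x ^ n / n! ≤ eˣ` at `x = i* + 1`. The upper bound comes from
the crude Stirling bound `n! ≤ e √n (n/e)ⁿ`, which turns `(i*)^{i*} / i*! < e^c` into
`i* - 1 < c + log √i*`, and `i* ≤ N ≤ 2πN`.
-/

open Real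
open scoped Nat

theorem factorial_le_exp_one_mul_sqrt_mul_div_exp_pow {n : ℕ} (hn : n ≠ 0) :
    (n ! : ℝ) ≤ exp 1 * √n * (n / exp 1) ^ n := by
  obtain ⟨m, rfl⟩ : ∃ m, n = m + 1 := Nat.exists_eq_succ_of_ne_zero hn
  -- `stirlingSeq n = n! / (√(2n) (n/e)ⁿ)` is antitone, hence at most its value `e/√2` at `n = 1`
  have hseq : Stirling.stirlingSeq (m + 1) ≤ exp 1 / √2 :=
    Stirling.stirlingSeq_one ▸ Stirling.stirlingSeq'_antitone (Nat.zero_le m)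
  rw [Stirling.stirlingSeq, div_le_iff₀ (by positivity)] at hseq
  calc _ ≤ exp 1 / √2 * (√(2 * (m + 1 : ℕ)) * ((m + 1 : ℕ) / exp 1) ^ (m + 1)) := hseq
    _ = _ := by rw [sqrt_mul zero_le_two]; field_simp

theorem exp_sub_one_div_sqrt_le_pow_div_factorial {n : ℕ} (hn : n ≠ 0) :
    exp (n - 1) / √n ≤ (n : ℝ) ^ n / n ! := by
  have hpow : ((n : ℝ) / exp 1) ^ n = (n : ℝ) ^ n / exp n := by
    rw [div_pow, ← exp_nat_mul, mul_one]
  rw [div_le_div_iff₀ (by positivity) (by positivity)]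
  calc exp (n - 1) * n ! ≤ exp (n - 1) * (exp 1 * √n * (n / exp 1) ^ n) := by
        gcongr; exact factorial_le_exp_one_mul_sqrt_mul_div_exp_pow hn
    _ = (n : ℝ) ^ n * √n := by
        rw [hpow, exp_sub]; field_simp

theorem le_add_one_of_exp_le_succ_pow_div_factorial {x : ℝ} {n : ℕ}
    (h : exp x ≤ ((n + 1 : ℕ) : ℝ) ^ n / n !) : x ≤ n + 1 := by
  have := h.trans (pow_div_factorial_le_exp _ (by positivity) n)
  exact_mod_cast exp_le_exp.mp this

theorem sub_one_lt_add_log_sqrt_of_pow_div_factorial_lt_exp {x : ℝ} {n : ℕ} (hn : n ≠ 0)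
    (h : (n : ℝ) ^ n / n ! < exp x) : (n : ℝ) - 1 < x + log √n := by
  have hsqrt : 0 < √(n : ℝ) := by positivity
  have := (exp_sub_one_div_sqrt_le_pow_div_factorial hn).trans_lt h
  rwa [div_lt_iff₀ hsqrt, ← exp_log hsqrt, ← exp_add, exp_lt_exp] at this

theorem support_size_bounds_general (c : ℝ) (N : ℕ)
    (istar : ℕ) (h1 : 1 ≤ istar) (h2 : istar < N)
    (hge : ((istar + 1 : ℕ) : ℝ) ^ istar / (Nat.factorial istar) ≥ Real.exp c)
    (hlt : ((istar : ℕ) : ℝ) ^ istar / (Nat.factorial istar) < Real.exp c) :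
    c - 1 ≤ (istar : ℝ) ∧ (istar : ℝ) ≤ c + Real.log (Real.sqrt (2 * π * N)) + 1 := by
  have hpos : istar ≠ 0 := Nat.one_le_iff_ne_zero.mp h1
  refine ⟨by linarith [le_add_one_of_exp_le_succ_pow_div_factorial hge], ?_⟩
  have hlog : log √(istar : ℝ) ≤ log √(2 * π * N) := by
    have : (istar : ℝ) ≤ N := by exact_mod_cast h2.le
    gcongr
    nlinarith [pi_gt_three]
  linarith [sub_one_lt_add_log_sqrt_of_pow_div_factorial_lt_exp hpos hlt]

theorem support_size_bounds (c : ℝ) (hc : 0 < c) (N : ℕ) (hN : 2 ≤ N)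
    (istar : ℕ) (h1 : 1 ≤ istar) (h2 : istar < N)
    (hge : ((istar + 1 : ℕ) : ℝ) ^ istar / (Nat.factorial istar) ≥ Real.exp c)
    (hlt : ((istar : ℕ) : ℝ) ^ istar / (Nat.factorial istar) < Real.exp c) :
    c - 1 ≤ (istar : ℝ) ∧ (istar : ℝ) ≤ c + Real.log (Real.sqrt (2 * π * N)) + 1 :=
  support_size_bounds_general c N istar h1 h2 hge hlt
end

section
/- Let a, b, A > 0, P_max > 0, f(z) = A·(z+b)/log₂(1+az) on (0, P_max], and y₀ = 1 + a·P_max. If y₀·ln(y₀) − y₀ − (ab−1) ≤ 0, then f attains its minimum on (0, P_max] at z = P_max. -/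
open Real

/- Writing `y = 1 + a z`, one has `f z = (A log 2 / a) · (y + c) / log y` with `c = a b - 1`, so it
suffices that `(y₀ + c) log y ≤ (y + c) log y₀` for `1 < y ≤ y₀`. This follows from the tangent-line
bound `y₀ (log y - log y₀) ≤ y - y₀` of the concave logarithm at `y₀`, together with the hypothesis
`c ≥ y₀ log y₀ - y₀`, which controls the remaining term because `log y - log y₀ ≤ 0`. -/

theorem add_mul_log_le_add_mul_log {c y y₀ : ℝ} (hy : 0 < y) (hyy₀ : y ≤ y₀) (hy₀ : 1 ≤ y₀)
    (hc : y₀ * log y₀ - y₀ ≤ c) : (y₀ + c) * log y ≤ (y + c) * log y₀ := by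
  have hy₀pos : 0 < y₀ := hy.trans_le hyy₀
  have hd : log y - log y₀ ≤ 0 := sub_nonpos.mpr (log_le_log hy hyy₀)
  have htangent : y₀ * (log y - log y₀) ≤ y - y₀ := by
    have h := log_le_sub_one_of_pos (div_pos hy hy₀pos)
    rw [log_div hy.ne' hy₀pos.ne', div_sub_one hy₀pos.ne', le_div_iff₀' hy₀pos] at h
    exact h
  have hlog : 0 ≤ log y₀ := log_nonneg hy₀
  nlinarith [mul_le_mul_of_nonpos_right hc hd, mul_le_mul_of_nonneg_left htangent hlog]

theorem min_at_pmax_general (a b A Pmax : ℝ) (ha : 0 < a) (hA : 0 < A)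
    (f : ℝ → ℝ)
    (hf : ∀ z, f z = A * (z + b) / (Real.log (1 + a * z) / Real.log 2))
    (y₀ : ℝ) (hy₀ : y₀ = 1 + a * Pmax)
    (hcond : y₀ * Real.log y₀ - y₀ - (a * b - 1) ≤ 0) :
    ∀ z ∈ Set.Ioc 0 Pmax, f Pmax ≤ f z := by
  rintro z ⟨hz, hzP⟩
  have hy : 1 < 1 + a * z := by nlinarith
  have hyy₀ : 1 + a * z ≤ y₀ := by rw [hy₀]; nlinarith
  have key := add_mul_log_le_add_mul_log (c := a * b - 1) (by linarith) hyy₀ (by linarith)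
    (by linarith)
  have key' : (Pmax + b) * log (1 + a * z) ≤ (z + b) * log y₀ := by
    rw [hy₀] at key ⊢
    nlinarith
  have hlog2 : 0 < log 2 := log_pos one_lt_two
  rw [hf, hf, ← hy₀, div_div_eq_mul_div, div_div_eq_mul_div,
    div_le_div_iff₀ (log_pos (by linarith)) (log_pos hy)]
  nlinarith [mul_le_mul_of_nonneg_left key' (mul_pos hA hlog2).le]

theorem min_at_pmax (a b A Pmax : ℝ) (ha : 0 < a) (hb : 0 < b) (hA : 0 < A)
    (hP : 0 < Pmax) (f : ℝ → ℝ)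
    (hf : ∀ z, f z = A * (z + b) / (Real.log (1 + a * z) / Real.log 2))
    (y₀ : ℝ) (hy₀ : y₀ = 1 + a * Pmax)
    (hcond : y₀ * Real.log y₀ - y₀ - (a * b - 1) ≤ 0) :
    ∀ z ∈ Set.Ioc 0 Pmax, f Pmax ≤ f z :=
  min_at_pmax_general a b A Pmax ha hA f hf y₀ hy₀ hcond
end

section
/- Let a, b, A > 0 and f(z) = A·(z+b)/log₂(1+az) on (0, ∞). If y* > 1 satisfies y*·ln(y*) − y* = ab − 1, then z* = (y* − 1)/a is the unique global minimizer of f on (0, ∞). -/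
open Real

/-! Substituting `y = 1 + a z` turns `f` into a positive multiple of
`g y = (y - 1 + a b) / log y`, and the condition on `y*` says `y - 1 + a b = y - y* + y* log y*`.
Since `log` is strictly concave, `y* log y < y - y* + y* log y*` for `y ≠ y*` (tangent line at `y*`),
so `g y > y* = g y*` for every `y > 1` other than `y*`. -/

theorem Real.mul_log_lt_sub_add_mul_log {c y : ℝ} (hc : 0 < c) (hy : 0 < y) (hne : y ≠ c) :
    c * log y < y - c + c * log c := by
  have hlt : log (y / c) < y / c - 1 :=
    log_lt_sub_one_of_pos (by positivity) (by rwa [ne_eq, div_eq_one_iff_eq hc.ne'])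
  rw [log_div hy.ne' hc.ne'] at hlt
  have := mul_lt_mul_of_pos_left hlt hc
  rw [mul_sub, mul_sub, mul_div_cancel₀ _ hc.ne', mul_one] at this
  linarith

theorem Real.lt_sub_add_mul_log_div_log {c y : ℝ} (hc : 0 < c) (hy : 1 < y) (hne : y ≠ c) :
    c < (y - c + c * log c) / log y := by
  rw [lt_div_iff₀ (log_pos hy)]
  exact mul_log_lt_sub_add_mul_log hc (by linarith) hne

theorem unique_global_minimizer_general (a b A : ℝ) (ha : 0 < a) (hA : 0 < A)
    (f : ℝ → ℝ)
    (hf : ∀ z, f z = A * (z + b) / (Real.log (1 + a * z) / Real.log 2))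
    (ystar : ℝ) (hy : 1 < ystar)
    (hcond : ystar * Real.log ystar - ystar = a * b - 1)
    (zstar : ℝ) (hz : zstar = (ystar - 1) / a) :
    ∀ z > 0, z ≠ zstar → f zstar < f z := by
  intro z hz0 hne
  have hf' : ∀ z, f z = A * log 2 / a *
      ((1 + a * z - ystar + ystar * log ystar) / log (1 + a * z)) := by
    intro z
    rw [hf, show 1 + a * z - ystar + ystar * log ystar = a * (z + b) by linarith]
    field_simp
  have hzstar : 1 + a * zstar = ystar := by
    rw [hz]
    field_simp
    ring
  have hfzstar : f zstar = A * log 2 / a * ystar := by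
    rw [hf', hzstar, sub_self, zero_add, mul_div_cancel_right₀ _ (log_pos hy).ne']
  have hne' : 1 + a * z ≠ ystar := fun h => hne (by rw [hz, ← h]; field_simp; ring)
  rw [hfzstar, hf']
  gcongr
  exact lt_sub_add_mul_log_div_log (by linarith) (by nlinarith) hne'

theorem unique_global_minimizer (a b A : ℝ) (ha : 0 < a) (hb : 0 < b) (hA : 0 < A)
    (f : ℝ → ℝ)
    (hf : ∀ z, f z = A * (z + b) / (Real.log (1 + a * z) / Real.log 2))
    (ystar : ℝ) (hy : 1 < ystar)
    (hcond : ystar * Real.log ystar - ystar = a * b - 1)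
    (zstar : ℝ) (hz : zstar = (ystar - 1) / a) :
    ∀ z > 0, z ≠ zstar → f zstar < f z :=
  unique_global_minimizer_general a b A ha hA f hf ystar hy hcond zstar hz
end

section
/- In the optimal solution of maximizing Σ_i p_r(i)(1 − e^{−c·p_i}) over the simplex with strictly decreasing positive weights p_r(i), the support of the optimal p* is a down-set: if p*_c(i) > 0 and j < i, then p*_c(j) > 0; moreover p*_c is nonincreasing in i. -/
open Real Finset

theorem Fintype.sum_comp_swap_add {ι α M : Type*} [Fintype ι] [DecidableEq ι] [AddCommMonoid M]
    (F : ι → α → M) (f : ι → α) {i j : ι} (hij : i ≠ j) :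
    ∑ k, F k (f (Equiv.swap i j k)) + (F i (f i) + F j (f j)) =
      ∑ k, F k (f k) + (F i (f j) + F j (f i)) := by
  have houtside : ∑ k ∈ {i, j}ᶜ, F k (f (Equiv.swap i j k)) = ∑ k ∈ {i, j}ᶜ, F k (f k) := by
    refine Finset.sum_congr rfl fun k hk => ?_
    simp only [mem_compl, mem_insert, mem_singleton, not_or] at hk
    rw [Equiv.swap_apply_of_ne_of_ne hk.1 hk.2]
  rw [← sum_add_sum_compl {i, j}, ← sum_add_sum_compl {i, j} (fun k => F k (f k)), houtside,
    sum_pair hij, sum_pair hij, Equiv.swap_apply_left, Equiv.swap_apply_right]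
  abel

/-- Exchange argument: if `j < i` but `p j < p i`, swapping the two values gains
`(w j - w i) * (g (p i) - g (p j)) > 0`. -/
theorem antitone_of_sum_comp_swap_le {ι : Type*} [Fintype ι] [LinearOrder ι] {w : ι → ℝ}
    (hw : StrictAnti w) {g : ℝ → ℝ} (hg : StrictMono g) {p : ι → ℝ}
    (hmax : ∀ i j, ∑ k, w k * g (p (Equiv.swap i j k)) ≤ ∑ k, w k * g (p k)) :
    Antitone p := by
  intro j i hji
  by_contra! hlt
  have hji : j < i := hji.lt_of_ne (by rintro rfl; exact hlt.false)
  have hswap := Fintype.sum_comp_swap_add (fun k x => w k * g x) p hji.ne'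
  have hgain : 0 < (w j - w i) * (g (p i) - g (p j)) :=
    mul_pos (sub_pos.2 (hw hji)) (sub_pos.2 (hg hlt))
  nlinarith [hmax i j]

theorem optimal_support_downset_general (N : ℕ) (c : ℝ) (hc : 0 < c)
    (pr : Fin N → ℝ)
    (hdec : ∀ i j : Fin N, i < j → pr j < pr i)
    (p : Fin N → ℝ) (hp0 : ∀ i, 0 ≤ p i) (hp1 : ∑ i, p i = 1)
    (hopt : ∀ q : Fin N → ℝ, (∀ i, 0 ≤ q i) → ∑ i, q i = 1 →
      ∑ i, pr i * (1 - Real.exp (-c * q i)) ≤ ∑ i, pr i * (1 - Real.exp (-c * p i))) :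
    (∀ i j : Fin N, j < i → 0 < p i → 0 < p j) ∧
    (∀ i j : Fin N, i ≤ j → p j ≤ p i) := by
  have hgain : StrictMono fun x => 1 - exp (-c * x) := fun x y hxy => by
    have := exp_lt_exp.2 (show -c * y < -c * x by nlinarith)
    linarith
  have hanti : Antitone p := antitone_of_sum_comp_swap_le hdec hgain fun i j =>
    hopt _ (fun k => hp0 _) ((Equiv.sum_comp (Equiv.swap i j) p).trans hp1)
  exact ⟨fun i j hji hpi => hpi.trans_le (hanti hji.le), fun i j hij => hanti hij⟩

theorem optimal_support_downset (N : ℕ) (hN : 0 < N) (c : ℝ) (hc : 0 < c)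
    (pr : Fin N → ℝ) (hpos : ∀ i, 0 < pr i)
    (hdec : ∀ i j : Fin N, i < j → pr j < pr i)
    (p : Fin N → ℝ) (hp0 : ∀ i, 0 ≤ p i) (hp1 : ∑ i, p i = 1)
    (hopt : ∀ q : Fin N → ℝ, (∀ i, 0 ≤ q i) → ∑ i, q i = 1 →
      ∑ i, pr i * (1 - Real.exp (-c * q i)) ≤ ∑ i, pr i * (1 - Real.exp (-c * p i))) :
    (∀ i j : Fin N, j < i → 0 < p i → 0 < p j) ∧
    (∀ i j : Fin N, i ≤ j → p j ≤ p i) :=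
  optimal_support_downset_general N c hc pr hdec p hp0 hp1 hopt
end
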